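/- arXiv:2408.13323 — 2 statements merged into one kernel-verified Lean document; each statement's English description precedes it below -/
import Mathlib

section
/- Suppose the Basic Assumption holds, β ∈ [0,∞), the sequence {θ^ν} is bounded away from zero, and θ^ν·|τ^ν − β| → 0. Then for every (x, y, u, α, λ) ∈ ℝ^n × ℝ^m × ℝ^q × ℝ × ℝ there exists a sequence (x^ν, y^ν, u^ν, α^ν, λ^ν) → (x, y, u, α, λ) such that limsup_{ν→∞} φ^ν(x^ν, y^ν, u^ν, α^ν, λ^ν) ≤ φ_β(x, y, u, α, λ). -/
open Filter Topology Metric Set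

attribute [local instance] Classical.propDecidable

noncomputable section

/-- `ℝ^n` with the Euclidean norm. -/
abbrev Rn (n : ℕ) : Type := EuclideanSpace ℝ (Fin n)

variable {n m : ℕ} {Q : Type*} [NormedAddCommGroup Q]

/-- `(x, y)` is feasible in the bilevel problem (P): `x ∈ X` and
`y ∈ τ-argmin_{z ∈ Y} { g(x,z) | H(x,z) ∈ D }`. -/
def PFeas (X : Set (Rn n)) (Y : Set (Rn m)) (D : Set Q)
    (g : Rn n × Rn m → ℝ) (H : Rn n × Rn m → Q) (τ : ℝ)
    (x : Rn n) (y : Rn m) : Prop :=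
  x ∈ X ∧ y ∈ Y ∧ H (x, y) ∈ D ∧
    ∀ z ∈ Y, H (x, z) ∈ D → g (x, y) ≤ g (x, z) + τ

/-- The minimum value `𝔪` of (P). -/
def PVal (X : Set (Rn n)) (Y : Set (Rn m)) (D : Set Q)
    (f : Rn n × Rn m → EReal) (g : Rn n × Rn m → ℝ) (H : Rn n × Rn m → Q)
    (τ : ℝ) : EReal :=
  ⨅ (x : Rn n) (y : Rn m) (_ : PFeas X Y D g H τ x y), f (x, y)

/-- Optimal solution of (P): feasible, finite objective value attaining `𝔪`. -/
def POpt (X : Set (Rn n)) (Y : Set (Rn m)) (D : Set Q)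
    (f : Rn n × Rn m → EReal) (g : Rn n × Rn m → ℝ) (H : Rn n × Rn m → Q)
    (τ : ℝ) (x : Rn n) (y : Rn m) : Prop :=
  PFeas X Y D g H τ x y ∧ f (x, y) ≠ ⊤ ∧ f (x, y) = PVal X Y D f g H τ

/-- Feasibility in the alternative problem (P)^ν with data `Yn, gn, Hn, lamBar, τn`. -/
def PnuFeas (X : Set (Rn n)) (Y : Set (Rn m)) (D : Set Q) (Yn : Set (Rn m))
    (gn : Rn n × Rn m → ℝ) (Hn : Rn n × Rn m → Q) (lamBar τn : ℝ)
    (x : Rn n) (y : Rn m) (u : Q) (α lam : ℝ) : Prop :=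
  x ∈ X ∧ y ∈ Y ∧ α ≤ 0 ∧ 0 ≤ lam ∧ lam ≤ lamBar ∧ Hn (x, y) + u ∈ D ∧
    ∀ z ∈ Yn, gn (x, y) + α ≤ gn (x, z) + lam * infDist (Hn (x, z)) D + τn

/-- Objective function of (P)^ν: `f^ν(x,y) + σ^ν ‖u‖ - θ^ν α`. -/
def PnuObj (fn : Rn n × Rn m → EReal) (σn θn : ℝ)
    (x : Rn n) (y : Rn m) (u : Q) (α : ℝ) : EReal :=
  fn (x, y) + ((σn * ‖u‖ - θn * α : ℝ) : EReal)

/-- The minimum value `𝔪^ν` of (P)^ν. -/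
def PnuVal (X : Set (Rn n)) (Y : Set (Rn m)) (D : Set Q) (Yn : Set (Rn m))
    (fn : Rn n × Rn m → EReal) (gn : Rn n × Rn m → ℝ) (Hn : Rn n × Rn m → Q)
    (σn θn lamBar τn : ℝ) : EReal :=
  ⨅ (x : Rn n) (y : Rn m) (u : Q) (α : ℝ) (lam : ℝ)
    (_ : PnuFeas X Y D Yn gn Hn lamBar τn x y u α lam),
    PnuObj fn σn θn x y u α

/-- `ε`-optimal solution of (P)^ν: feasible with finite objective value at most `𝔪^ν + ε`. -/
def PnuEps (X : Set (Rn n)) (Y : Set (Rn m)) (D : Set Q) (Yn : Set (Rn m))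
    (fn : Rn n × Rn m → EReal) (gn : Rn n × Rn m → ℝ) (Hn : Rn n × Rn m → Q)
    (σn θn lamBar τn ε : ℝ)
    (x : Rn n) (y : Rn m) (u : Q) (α lam : ℝ) : Prop :=
  PnuFeas X Y D Yn gn Hn lamBar τn x y u α lam ∧
    PnuObj fn σn θn x y u α ≠ ⊤ ∧
    PnuObj fn σn θn x y u α ≤ PnuVal X Y D Yn fn gn Hn σn θn lamBar τn + (ε : EReal)

/-- The value function `V(x,u) = inf_{y ∈ Y} { g(x,y) | H(x,y) + u ∈ D }`. -/
def Vfun (Y : Set (Rn m)) (D : Set Q)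
    (g : Rn n × Rn m → ℝ) (H : Rn n × Rn m → Q)
    (x : Rn n) (u : Q) : EReal :=
  ⨅ (y : Rn m) (_ : y ∈ Y ∧ H (x, y) + u ∈ D), (g (x, y) : EReal)

/-- The value function `V` is calm at `x` with penalty threshold `lam`. -/
def CalmAtWith (Y : Set (Rn m)) (D : Set Q)
    (g : Rn n × Rn m → ℝ) (H : Rn n × Rn m → Q)
    (x : Rn n) (lam : ℝ) : Prop :=
  0 ≤ lam ∧ ∀ u : Q,
    Vfun Y D g H x 0 - ((lam * ‖u‖ : ℝ) : EReal) ≤ Vfun Y D g H x u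

/-- The value function `V` is calm at `x`. -/
def CalmAt (Y : Set (Rn m)) (D : Set Q)
    (g : Rn n × Rn m → ℝ) (H : Rn n × Rn m → Q) (x : Rn n) : Prop :=
  ∃ lam : ℝ, CalmAtWith Y D g H x lam

/-- The value function `V` is locally calm at `xbar`. -/
def LocallyCalmAt (Y : Set (Rn m)) (D : Set Q)
    (g : Rn n × Rn m → ℝ) (H : Rn n × Rn m → Q) (xbar : Rn n) : Prop :=
  ∃ lam ρ : ℝ, 0 ≤ lam ∧ 0 < ρ ∧
    ∀ x ∈ Metric.closedBall xbar ρ, ∀ u : Q,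
      Vfun Y D g H x 0 - ((lam * ‖u‖ : ℝ) : EReal) ≤ Vfun Y D g H x u

/-- The penalty-based value function `μ(x,λ) = inf_{y ∈ S} [g(x,y) + λ dist(H(x,y), D)]`. -/
def muSet (S : Set (Rn m)) (D : Set Q)
    (g : Rn n × Rn m → ℝ) (H : Rn n × Rn m → Q)
    (x : Rn n) (lam : ℝ) : EReal :=
  ⨅ (y : Rn m) (_ : y ∈ S), ((g (x, y) + lam * infDist (H (x, y)) D : ℝ) : EReal)

/-- The Basic Assumption (Assumption 2.1). -/
structure BasicAssumption (X : Set (Rn n)) (Y : Set (Rn m)) (D : Set Q)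
    (Yν : ℕ → Set (Rn m))
    (f : Rn n × Rn m → EReal) (fν : ℕ → Rn n × Rn m → EReal)
    (g : Rn n × Rn m → ℝ) (gν : ℕ → Rn n × Rn m → ℝ)
    (H : Rn n × Rn m → Q) (Hν : ℕ → Rn n × Rn m → Q)
    (σ θ lamBar τν δ η : ℕ → ℝ) : Prop where
  X_nonempty : X.Nonempty
  X_closed : IsClosed X
  Y_nonempty : Y.Nonempty
  Y_closed : IsClosed Y
  D_nonempty : D.Nonempty
  D_closed : IsClosed D
  Yν_nonempty : ∀ ν, (Yν ν).Nonempty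
  Yν_subset : ∀ ν, Yν ν ⊆ Y
  Yν_conv : ∀ y : Rn m,
    Tendsto (fun ν => infDist y (Yν ν)) atTop (𝓝 (infDist y Y))
  δ_lim : Tendsto δ atTop (𝓝 0)
  g_err : ∀ ν, ∀ x ∈ X, ∀ y ∈ Y, |gν ν (x, y) - g (x, y)| ≤ δ ν
  g_cont : ContinuousOn g (X ×ˢ Y)
  η_lim : Tendsto η atTop (𝓝 0)
  H_err : ∀ ν, ∀ x ∈ X, ∀ y ∈ Y,
    |infDist (Hν ν (x, y)) D - infDist (H (x, y)) D| ≤ η ν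
  H_cont : ContinuousOn H (X ×ˢ Y)
  f_ne_bot : ∀ p, f p ≠ ⊥
  fν_ne_bot : ∀ ν p, fν ν p ≠ ⊥
  f_limsup : ∀ x ∈ X, ∀ y ∈ Y,
    limsup (fun ν => fν ν (x, y)) atTop ≤ f (x, y)
  f_liminf : ∀ x ∈ X, ∀ y ∈ Y, ∀ (xs : ℕ → Rn n) (ys : ℕ → Rn m),
    (∀ ν, xs ν ∈ X) → (∀ ν, ys ν ∈ Y) →
    Tendsto xs atTop (𝓝 x) → Tendsto ys atTop (𝓝 y) →
    f (x, y) ≤ liminf (fun ν => fν ν (xs ν, ys ν)) atTop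
  σ_nonneg : ∀ ν, 0 ≤ σ ν
  θ_nonneg : ∀ ν, 0 ≤ θ ν
  lamBar_nonneg : ∀ ν, 0 ≤ lamBar ν
  τν_nonneg : ∀ ν, 0 ≤ τν ν
  lamBar_top : Tendsto lamBar atTop atTop
  ση_lim : Tendsto (fun ν => σ ν * η ν) atTop (𝓝 0)
  θlamη_lim : Tendsto (fun ν => θ ν * lamBar ν * η ν) atTop (𝓝 0)
  θδ_lim : Tendsto (fun ν => θ ν * δ ν) atTop (𝓝 0)

/-- The extended real-valued representation `φ^ν` of (P)^ν. -/
def phiNu (X : Set (Rn n)) (Y : Set (Rn m)) (D : Set Q) (Yn : Set (Rn m))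
    (fn : Rn n × Rn m → EReal) (gn : Rn n × Rn m → ℝ) (Hn : Rn n × Rn m → Q)
    (σn θn lamBar τn : ℝ)
    (x : Rn n) (y : Rn m) (u : Q) (α lam : ℝ) : EReal :=
  if x ∈ X ∧ y ∈ Y ∧ α ≤ 0 ∧ 0 ≤ lam ∧ lam ≤ lamBar ∧ Hn (x, y) + u ∈ D ∧
      ((gn (x, y) + α : ℝ) : EReal) ≤ muSet Yn D gn Hn x lam + (τn : EReal)
  then fn (x, y) + ((σn * ‖u‖ - θn * α : ℝ) : EReal) else ⊤

/-- The extended real-valued function `φ_β` representing a restriction of (P). -/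
def phiBeta (X : Set (Rn n)) (Y : Set (Rn m)) (D : Set Q)
    (f : Rn n × Rn m → EReal) (g : Rn n × Rn m → ℝ) (H : Rn n × Rn m → Q)
    (β : ℝ)
    (x : Rn n) (y : Rn m) (u : Q) (α lam : ℝ) : EReal :=
  if x ∈ X ∧ y ∈ Y ∧ u = 0 ∧ α = 0 ∧ 0 ≤ lam ∧ H (x, y) ∈ D ∧
      (g (x, y) : EReal) ≤ muSet Y D g H x lam + (β : EReal)
  then f (x, y) else ⊤

/-!
Away from the domain of `φ_β` the constant sequence works. At a point of it, keep `x`, `y` and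
(eventually `λ ≤ λ̄^ν`) `λ` fixed, let `u^ν` move `H^ν(x,y)` into `D` with `‖u^ν‖ ≤ 2η^ν`, and take
`α^ν = min(0, τ^ν - β - 2δ^ν - λη^ν)`. The uniform errors `δ^ν, η^ν` of (c), (d) and `Y^ν ⊆ Y`
keep `y` feasible for the lower level of `φ^ν`, and the residual `σ^ν‖u^ν‖ - θ^ν α^ν` tends to `0`
by (f) and `θ^ν |τ^ν - β| → 0`, so the limsup property of `f^ν` concludes.
-/

theorem Metric.exists_mem_dist_le_two_mul_infDist {E : Type*} [MetricSpace E] {D : Set E}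
    (hD : IsClosed D) (hne : D.Nonempty) (p : E) : ∃ d ∈ D, dist p d ≤ 2 * infDist p D := by
  rcases (infDist_nonneg (x := p) (s := D)).eq_or_lt with h | h
  · exact ⟨p, (hD.mem_iff_infDist_zero hne).2 h.symm, by simp [← h]⟩
  · obtain ⟨d, hd, hpd⟩ := (infDist_lt_iff hne).1 (by linarith : infDist p D < 2 * infDist p D)
    exact ⟨d, hd, hpd.le⟩

theorem tendsto_zero_of_tendsto_mul_of_forall_le {ι : Type*} {l : Filter ι} {a θ : ι → ℝ}
    {c : ℝ} (hc : 0 < c) (hθ : ∀ i, c ≤ θ i) (h : Tendsto (fun i => θ i * a i) l (𝓝 0)) :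
    Tendsto a l (𝓝 0) := by
  refine squeeze_zero_norm (fun i => ?_) ((h.norm.const_mul c⁻¹).trans_eq (by simp))
  rw [le_inv_mul_iff₀ hc, norm_mul, Real.norm_of_nonneg (hc.le.trans (hθ i))]
  exact mul_le_mul_of_nonneg_right (hθ i) (norm_nonneg _)

theorem EReal.limsup_add_coe_le {ι : Type*} {l : Filter ι} [l.NeBot] (a : ι → EReal) {r : ι → ℝ}
    (hr : Tendsto r l (𝓝 0)) : limsup (fun i => a i + (r i : EReal)) l ≤ limsup a l := by
  have hr' : limsup (fun i => (r i : EReal)) l = 0 :=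
    (continuous_coe_real_ereal.tendsto' 0 0 rfl |>.comp hr).limsup_eq
  refine (EReal.limsup_add_le (.inr ?_) (.inr ?_)).trans_eq ?_ <;> simp [hr']

theorem coe_le_muSet_add_iff {S : Set (Rn m)} {D : Set Q} {g : Rn n × Rn m → ℝ}
    {H : Rn n × Rn m → Q} {x : Rn n} {lam c b : ℝ} :
    (c : EReal) ≤ muSet S D g H x lam + b ↔
      ∀ z ∈ S, c ≤ g (x, z) + lam * infDist (H (x, z)) D + b := by
  rw [← EReal.sub_le_iff_le_add (.inl (EReal.coe_ne_bot b)) (.inl (EReal.coe_ne_top b)),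
    ← EReal.coe_sub, muSet, le_iInf₂_iff]
  refine forall₂_congr fun z _ => ?_
  rw [EReal.coe_le_coe_iff]
  constructor <;> intro h <;> linarith

namespace BasicAssumption

variable {X : Set (Rn n)} {Y : Set (Rn m)} {D : Set Q} {Yν : ℕ → Set (Rn m)}
  {f : Rn n × Rn m → EReal} {fν : ℕ → Rn n × Rn m → EReal}
  {g : Rn n × Rn m → ℝ} {gν : ℕ → Rn n × Rn m → ℝ}
  {H : Rn n × Rn m → Q} {Hν : ℕ → Rn n × Rn m → Q}
  {σ θ lamBar τν δ η : ℕ → ℝ}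
  (ba : BasicAssumption X Y D Yν f fν g gν H Hν σ θ lamBar τν δ η)
include ba

theorem δ_nonneg (ν : ℕ) : 0 ≤ δ ν := by
  obtain ⟨x, hx⟩ := ba.X_nonempty
  obtain ⟨y, hy⟩ := ba.Y_nonempty
  exact (abs_nonneg _).trans (ba.g_err ν x hx y hy)

theorem η_nonneg (ν : ℕ) : 0 ≤ η ν := by
  obtain ⟨x, hx⟩ := ba.X_nonempty
  obtain ⟨y, hy⟩ := ba.Y_nonempty
  exact (abs_nonneg _).trans (ba.H_err ν x hx y hy)

theorem le_gν_add {x : Rn n} {y : Rn m} (hx : x ∈ X) (hy : y ∈ Y) (ν : ℕ) :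
    g (x, y) ≤ gν ν (x, y) + δ ν := by
  linarith [(abs_le.1 (ba.g_err ν x hx y hy)).1]

theorem gν_le_add {x : Rn n} {y : Rn m} (hx : x ∈ X) (hy : y ∈ Y) (ν : ℕ) :
    gν ν (x, y) ≤ g (x, y) + δ ν := by
  linarith [(abs_le.1 (ba.g_err ν x hx y hy)).2]

theorem infDist_le_add {x : Rn n} {y : Rn m} (hx : x ∈ X) (hy : y ∈ Y) (ν : ℕ) :
    infDist (H (x, y)) D ≤ infDist (Hν ν (x, y)) D + η ν := by
  linarith [(abs_le.1 (ba.H_err ν x hx y hy)).1]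

theorem exists_add_mem_norm_le {x : Rn n} {y : Rn m} (hx : x ∈ X) (hy : y ∈ Y) (hH : H (x, y) ∈ D) :
    ∃ us : ℕ → Q, (∀ ν, Hν ν (x, y) + us ν ∈ D) ∧ ∀ ν, ‖us ν‖ ≤ 2 * η ν := by
  choose d hdD hd using fun ν =>
    exists_mem_dist_le_two_mul_infDist ba.D_closed ba.D_nonempty (Hν ν (x, y))
  refine ⟨fun ν => d ν - Hν ν (x, y), fun ν => by simpa using hdD ν, fun ν => ?_⟩
  have hdist : infDist (Hν ν (x, y)) D ≤ η ν := by
    simpa [infDist_zero_of_mem hH] using (abs_le.1 (ba.H_err ν x hx y hy)).2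
  rw [← dist_eq_norm, dist_comm]
  linarith [hd ν]

theorem coe_gν_add_le_muSet {x : Rn n} {y : Rn m} {lam β a : ℝ} (hx : x ∈ X) (hy : y ∈ Y)
    (hlam : 0 ≤ lam) (hg : (g (x, y) : EReal) ≤ muSet Y D g H x lam + β) (ν : ℕ)
    (ha : a ≤ τν ν - β - 2 * δ ν - lam * η ν) :
    ((gν ν (x, y) + a : ℝ) : EReal) ≤ muSet (Yν ν) D (gν ν) (Hν ν) x lam + τν ν := by
  rw [coe_le_muSet_add_iff] at hg ⊢
  intro z hz
  have hzY := ba.Yν_subset ν hz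
  have hH := mul_le_mul_of_nonneg_left (ba.infDist_le_add hx hzY ν) hlam
  linarith [hg z hzY, ba.le_gν_add hx hzY ν, ba.gν_le_add hx hy ν]

theorem tendsto_penalty_zero {β lam : ℝ} (hrate : Tendsto (fun ν => θ ν * |τν ν - β|) atTop (𝓝 0))
    (hlam : 0 ≤ lam) {us : ℕ → Q} (hus : ∀ ν, ‖us ν‖ ≤ 2 * η ν) :
    Tendsto (fun ν => σ ν * ‖us ν‖ - θ ν * min 0 (τν ν - β - 2 * δ ν - lam * η ν))
      atTop (𝓝 0) := by
  have hbound : Tendsto (fun ν => 2 * (σ ν * η ν) + θ ν * |τν ν - β| + 2 * (θ ν * δ ν)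
      + θ ν * lamBar ν * η ν) atTop (𝓝 0) := by
    simpa using (((ba.ση_lim.const_mul 2).add hrate).add (ba.θδ_lim.const_mul 2)).add
      ba.θlamη_lim
  refine squeeze_zero' (Eventually.of_forall fun ν => ?_) ?_ hbound
  · have := mul_nonneg (ba.σ_nonneg ν) (norm_nonneg (us ν))
    have := mul_nonpos_of_nonneg_of_nonpos (ba.θ_nonneg ν)
      (min_le_left 0 (τν ν - β - 2 * δ ν - lam * η ν))
    linarith
  filter_upwards [ba.lamBar_top.eventually_ge_atTop lam] with ν hν
  have hmin : -|τν ν - β| - 2 * δ ν - lam * η ν ≤ min 0 (τν ν - β - 2 * δ ν - lam * η ν) :=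
    le_min (by linarith [abs_nonneg (τν ν - β), ba.δ_nonneg ν, mul_nonneg hlam (ba.η_nonneg ν)])
      (by linarith [neg_abs_le (τν ν - β)])
  have hσ := mul_le_mul_of_nonneg_left (hus ν) (ba.σ_nonneg ν)
  have hθ := mul_le_mul_of_nonneg_left hmin (ba.θ_nonneg ν)
  have hlamBar := mul_le_mul_of_nonneg_left hν (mul_nonneg (ba.θ_nonneg ν) (ba.η_nonneg ν))
  linarith

end BasicAssumption

theorem phiNu_limsup_le_phiBeta_general
    (X : Set (Rn n)) (Y : Set (Rn m)) (D : Set Q) (Yν : ℕ → Set (Rn m))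
    (f : Rn n × Rn m → EReal) (fν : ℕ → Rn n × Rn m → EReal)
    (g : Rn n × Rn m → ℝ) (gν : ℕ → Rn n × Rn m → ℝ)
    (H : Rn n × Rn m → Q) (Hν : ℕ → Rn n × Rn m → Q)
    (σ θ lamBar τν δ η : ℕ → ℝ)
    (ba : BasicAssumption X Y D Yν f fν g gν H Hν σ θ lamBar τν δ η)
    (β : ℝ)
    (hθbdd : ∃ c : ℝ, 0 < c ∧ ∀ ν, c ≤ θ ν)
    (hrate : Tendsto (fun ν => θ ν * |τν ν - β|) atTop (𝓝 0))
    (x : Rn n) (y : Rn m) (u : Q) (α lam : ℝ) :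
    ∃ (xs : ℕ → Rn n) (ys : ℕ → Rn m) (us : ℕ → Q) (αs lams : ℕ → ℝ),
      Tendsto xs atTop (𝓝 x) ∧ Tendsto ys atTop (𝓝 y) ∧
      Tendsto us atTop (𝓝 u) ∧ Tendsto αs atTop (𝓝 α) ∧
      Tendsto lams atTop (𝓝 lam) ∧
      limsup (fun ν => phiNu X Y D (Yν ν) (fν ν) (gν ν) (Hν ν)
          (σ ν) (θ ν) (lamBar ν) (τν ν) (xs ν) (ys ν) (us ν) (αs ν) (lams ν)) atTop
        ≤ phiBeta X Y D f g H β x y u α lam := by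
  by_cases hfeas : x ∈ X ∧ y ∈ Y ∧ u = 0 ∧ α = 0 ∧ 0 ≤ lam ∧ H (x, y) ∈ D ∧
      (g (x, y) : EReal) ≤ muSet Y D g H x lam + (β : EReal)
  swap
  · refine ⟨fun _ => x, fun _ => y, fun _ => u, fun _ => α, fun _ => lam, tendsto_const_nhds,
      tendsto_const_nhds, tendsto_const_nhds, tendsto_const_nhds, tendsto_const_nhds, ?_⟩
    rw [phiBeta, if_neg hfeas]
    exact le_top
  obtain ⟨hx, hy, rfl, rfl, hlam, hH, hg⟩ := hfeas
  obtain ⟨c, hc, hcθ⟩ := hθbdd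
  obtain ⟨us, husD, hus⟩ := ba.exists_add_mem_norm_le hx hy hH
  have hτ : Tendsto (fun ν => τν ν - β) atTop (𝓝 0) := (tendsto_zero_iff_abs_tendsto_zero _).2
    (tendsto_zero_of_tendsto_mul_of_forall_le hc hcθ hrate)
  have hlamBar : ∀ᶠ ν in atTop, lam ≤ lamBar ν := ba.lamBar_top.eventually_ge_atTop lam
  refine ⟨fun _ => x, fun _ => y, us, fun ν => min 0 (τν ν - β - 2 * δ ν - lam * η ν),
    fun ν => min lam (lamBar ν), tendsto_const_nhds, tendsto_const_nhds,
    squeeze_zero_norm hus (by simpa using ba.η_lim.const_mul 2), ?_,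
    tendsto_const_nhds.congr' (hlamBar.mono fun ν h => (min_eq_left h).symm), ?_⟩
  · simpa using (tendsto_const_nhds (x := (0 : ℝ))).min
      ((hτ.sub (ba.δ_lim.const_mul 2)).sub (ba.η_lim.const_mul lam))
  rw [phiBeta, if_pos ⟨hx, hy, rfl, rfl, hlam, hH, hg⟩]
  calc _ = limsup (fun ν => fν ν (x, y) + ((σ ν * ‖us ν‖
          - θ ν * min 0 (τν ν - β - 2 * δ ν - lam * η ν) : ℝ) : EReal)) atTop := by
        refine limsup_congr (hlamBar.mono fun ν hν => ?_)
        dsimp only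
        rw [min_eq_left hν, phiNu, if_pos ⟨hx, hy, min_le_left _ _, hlam, hν, husD ν,
          ba.coe_gν_add_le_muSet hx hy hlam hg ν (min_le_right _ _)⟩]
    _ ≤ limsup (fun ν => fν ν (x, y)) atTop :=
        EReal.limsup_add_coe_le _ (ba.tendsto_penalty_zero hrate hlam hus)
    _ ≤ f (x, y) := ba.f_limsup x hx y hy

/-- Lemma 5.4 (limsup property): for every point there is a sequence converging to it
along which `limsup φ^ν ≤ φ_β`. -/
theorem phiNu_limsup_le_phiBeta
    [NormedSpace ℝ Q] [FiniteDimensional ℝ Q]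
    (X : Set (Rn n)) (Y : Set (Rn m)) (D : Set Q) (Yν : ℕ → Set (Rn m))
    (f : Rn n × Rn m → EReal) (fν : ℕ → Rn n × Rn m → EReal)
    (g : Rn n × Rn m → ℝ) (gν : ℕ → Rn n × Rn m → ℝ)
    (H : Rn n × Rn m → Q) (Hν : ℕ → Rn n × Rn m → Q)
    (σ θ lamBar τν δ η : ℕ → ℝ)
    (ba : BasicAssumption X Y D Yν f fν g gν H Hν σ θ lamBar τν δ η)
    (β : ℝ) (hβ : 0 ≤ β)
    (hθbdd : ∃ c : ℝ, 0 < c ∧ ∀ ν, c ≤ θ ν)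
    (hrate : Tendsto (fun ν => θ ν * |τν ν - β|) atTop (𝓝 0))
    (x : Rn n) (y : Rn m) (u : Q) (α lam : ℝ) :
    ∃ (xs : ℕ → Rn n) (ys : ℕ → Rn m) (us : ℕ → Q) (αs lams : ℕ → ℝ),
      Tendsto xs atTop (𝓝 x) ∧ Tendsto ys atTop (𝓝 y) ∧
      Tendsto us atTop (𝓝 u) ∧ Tendsto αs atTop (𝓝 α) ∧
      Tendsto lams atTop (𝓝 lam) ∧
      limsup (fun ν => phiNu X Y D (Yν ν) (fν ν) (gν ν) (Hν ν)
          (σ ν) (θ ν) (lamBar ν) (τν ν) (xs ν) (ys ν) (us ν) (αs ν) (lams ν)) atTop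
        ≤ phiBeta X Y D f g H β x y u α lam :=
  phiNu_limsup_le_phiBeta_general X Y D Yν f fν g gν H Hν σ θ lamBar τν δ η ba β hθbdd hrate x y u α
    lam
end
end

section
/- Suppose there exists an optimal solution (x*, y*) of (P) such that the value function V is calm at x* with penalty threshold λ*. Then: (i) if (x̄, ȳ, ū, ᾱ, λ̄) minimizes φ_τ, then (x̄, ȳ) is an optimal solution of (P); and (ii) for every λ ∈ [λ*, ∞), the point (x*, y*, 0, 0, λ) minimizes φ_τ. -/
open Filter Topology Metric Set

attribute [local instance] Classical.propDecidable

noncomputable section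

variable {n m : ℕ} {Q : Type*} [NormedAddCommGroup Q]

/-- `inf φ_τ`, the infimum of `φ_τ` over all `(x, y, u, α, λ)`. -/
def phiBetaInf (X : Set (Rn n)) (Y : Set (Rn m)) (D : Set Q)
    (f : Rn n × Rn m → EReal) (g : Rn n × Rn m → ℝ) (H : Rn n × Rn m → Q)
    (β : ℝ) : EReal :=
  ⨅ (x : Rn n) (y : Rn m) (u : Q) (α : ℝ) (lam : ℝ),
    phiBeta X Y D f g H β x y u α lam


/-!
Every point in the domain of `φ_τ` is feasible for (P), because `μ(x, λ) ≤ g(x, z)` for each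
lower-level feasible `z`; hence `inf φ_τ ≥ 𝔪`. Conversely, calmness of `V` at `x*` gives
`V(x*, 0) ≤ μ(x*, λ)` for `λ ≥ λ*`: perturbing the constraint by `u = d - H(x*, z)` with `d ∈ D`
makes any `z ∈ Y` feasible at cost `λ* ‖u‖`, and optimising over `d` yields the distance to `D`.
Since `y*` is `τ`-optimal, `g(x*, y*) ≤ V(x*, 0) + τ ≤ μ(x*, λ) + τ`, so `(x*, y*, 0, 0, λ)` lies
in the domain of `φ_τ` with value `f(x*, y*) = 𝔪`. Thus `inf φ_τ = 𝔪` and both claims follow.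
-/

lemma le_mul_infDist {α : Type*} [PseudoMetricSpace α] {p : α} {s : Set α} {a c : ℝ}
    (hc : 0 ≤ c) (hs : s.Nonempty) (h : ∀ q ∈ s, a ≤ c * dist p q) :
    a ≤ c * infDist p s := by
  have := hs.to_subtype
  rw [infDist_eq_iInf, Real.mul_iInf_of_nonneg hc]
  exact le_ciInf fun q => h q q.2

section BilevelPenalty

variable {X : Set (Rn n)} {Y : Set (Rn m)} {D : Set Q} {f : Rn n × Rn m → EReal}
  {g : Rn n × Rn m → ℝ} {H : Rn n × Rn m → Q} {τ : ℝ} {x : Rn n} {y z : Rn m} {u : Q}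
  {α lam lam₀ : ℝ}

lemma vfun_le (hz : z ∈ Y) (hHz : H (x, z) + u ∈ D) : Vfun Y D g H x u ≤ g (x, z) :=
  iInf₂_le z ⟨hz, hHz⟩

lemma muSet_le (hz : z ∈ Y) (hHz : H (x, z) ∈ D) : muSet Y D g H x lam ≤ g (x, z) := by
  have : muSet Y D g H x lam ≤ ((g (x, z) + lam * infDist (H (x, z)) D : ℝ) : EReal) :=
    iInf₂_le z hz
  rwa [infDist_zero_of_mem hHz, mul_zero, add_zero] at this

lemma PFeas.coe_sub_le_vfun_zero (h : PFeas X Y D g H τ x y) :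
    ((g (x, y) - τ : ℝ) : EReal) ≤ Vfun Y D g H x 0 :=
  le_iInf₂ fun z hz => EReal.coe_le_coe_iff.mpr <| by
    have := h.2.2.2 z hz.1 (by simpa using hz.2)
    linarith

theorem CalmAtWith.vfun_zero_le_muSet (hcalm : CalmAtWith Y D g H x lam₀) (hD : D.Nonempty)
    (hlam : lam₀ ≤ lam) : Vfun Y D g H x 0 ≤ muSet Y D g H x lam := by
  refine le_iInf₂ fun z hz => ?_
  have hpert : ∀ d ∈ D,
      Vfun Y D g H x 0 ≤ ((g (x, z) + lam₀ * dist (H (x, z)) d : ℝ) : EReal) := by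
    intro d hd
    have := (hcalm.2 (d - H (x, z))).trans (vfun_le hz (by simpa using hd))
    rw [EReal.sub_le_iff_le_add (.inl (EReal.coe_ne_bot _)) (.inl (EReal.coe_ne_top _))] at this
    rwa [dist_eq_norm', EReal.coe_add, ← EReal.coe_add]
  generalize Vfun Y D g H x 0 = V at hpert ⊢
  induction V with
  | bot => exact bot_le
  | top => exact absurd (hpert _ hD.some_mem) (not_le.mpr (EReal.coe_lt_top _))
  | coe v =>
    simp only [EReal.coe_le_coe_iff] at hpert ⊢
    have hv : v - g (x, z) ≤ lam₀ * infDist (H (x, z)) D :=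
      le_mul_infDist hcalm.1 hD fun d hd => by linarith [hpert d hd]
    linarith [mul_le_mul_of_nonneg_right hlam (infDist_nonneg : 0 ≤ infDist (H (x, z)) D)]

theorem PFeas.coe_le_muSet_add (h : PFeas X Y D g H τ x y) (hcalm : CalmAtWith Y D g H x lam₀)
    (hD : D.Nonempty) (hlam : lam₀ ≤ lam) :
    (g (x, y) : EReal) ≤ muSet Y D g H x lam + τ := by
  have := h.coe_sub_le_vfun_zero.trans (hcalm.vfun_zero_le_muSet hD hlam)
  rwa [EReal.coe_sub, EReal.sub_le_iff_le_add (.inl (EReal.coe_ne_bot _))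
    (.inl (EReal.coe_ne_top _))] at this

lemma phiBeta_eq_of_pFeas (h : PFeas X Y D g H τ x y) (hlam : 0 ≤ lam)
    (hg : (g (x, y) : EReal) ≤ muSet Y D g H x lam + τ) :
    phiBeta X Y D f g H τ x y 0 0 lam = f (x, y) :=
  if_pos ⟨h.1, h.2.1, rfl, rfl, hlam, h.2.2.1, hg⟩

theorem pFeas_of_phiBeta_ne_top (h : phiBeta X Y D f g H τ x y u α lam ≠ ⊤) :
    PFeas X Y D g H τ x y := by
  unfold phiBeta at h
  split_ifs at h with hdom
  · obtain ⟨hx, hy, -, -, -, hHy, hg⟩ := hdom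
    refine ⟨hx, hy, hHy, fun z hz hHz => EReal.coe_le_coe_iff.mp ?_⟩
    calc (g (x, y) : EReal) ≤ muSet Y D g H x lam + τ := hg
      _ ≤ g (x, z) + τ := add_le_add_left (muSet_le hz hHz) _
  · exact absurd rfl h

lemma phiBeta_eq_of_ne_top (h : phiBeta X Y D f g H τ x y u α lam ≠ ⊤) :
    phiBeta X Y D f g H τ x y u α lam = f (x, y) := by
  unfold phiBeta at h ⊢
  split_ifs at h ⊢
  exacts [rfl, absurd rfl h]

lemma pVal_le_phiBetaInf : PVal X Y D f g H τ ≤ phiBetaInf X Y D f g H τ :=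
  le_iInf fun x => le_iInf fun y => le_iInf fun u => le_iInf fun α => le_iInf fun lam => by
    by_cases h : phiBeta X Y D f g H τ x y u α lam = ⊤
    · exact h ▸ le_top
    · exact phiBeta_eq_of_ne_top h ▸
        iInf₂_le_of_le x y (iInf_le_of_le (pFeas_of_phiBeta_ne_top h) le_rfl)

lemma phiBetaInf_le : phiBetaInf X Y D f g H τ ≤ phiBeta X Y D f g H τ x y u α lam :=
  iInf_le_of_le x <| iInf_le_of_le y <| iInf_le_of_le u <| iInf_le_of_le α <| iInf_le _ lam

end BilevelPenalty

theorem phiTau_minimizers_general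
    (X : Set (Rn n)) (Y : Set (Rn m)) (D : Set Q)
    (f : Rn n × Rn m → EReal) (g : Rn n × Rn m → ℝ) (H : Rn n × Rn m → Q)
    (τ : ℝ) (hDne : D.Nonempty)
    (xstar : Rn n) (ystar : Rn m) (lamstar : ℝ)
    (hopt : POpt X Y D f g H τ xstar ystar)
    (hcalm : CalmAtWith Y D g H xstar lamstar) :
    (∀ (xb : Rn n) (yb : Rn m) (ub : Q) (αb lamb : ℝ),
      phiBeta X Y D f g H τ xb yb ub αb lamb = phiBetaInf X Y D f g H τ →
      phiBeta X Y D f g H τ xb yb ub αb lamb ≠ ⊤ →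
      POpt X Y D f g H τ xb yb) ∧
    (∀ lam : ℝ, lamstar ≤ lam →
      phiBeta X Y D f g H τ xstar ystar 0 0 lam = phiBetaInf X Y D f g H τ ∧
      phiBeta X Y D f g H τ xstar ystar 0 0 lam ≠ ⊤) := by
  obtain ⟨hfeas, hfin, hval⟩ := hopt
  have hstar : ∀ lam, lamstar ≤ lam →
      phiBeta X Y D f g H τ xstar ystar 0 0 lam = f (xstar, ystar) := fun lam hlam =>
    phiBeta_eq_of_pFeas hfeas (hcalm.1.trans hlam) (hfeas.coe_le_muSet_add hcalm hDne hlam)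
  have hinf : phiBetaInf X Y D f g H τ = f (xstar, ystar) :=
    le_antisymm (hstar lamstar le_rfl ▸ phiBetaInf_le) (hval ▸ pVal_le_phiBetaInf)
  refine ⟨fun xb yb ub αb lamb hmin hne => ?_, fun lam hlam => ?_⟩
  · have heq := phiBeta_eq_of_ne_top hne
    refine ⟨pFeas_of_phiBeta_ne_top hne, heq ▸ hne, ?_⟩
    rw [← heq, hmin, hinf, hval]
  · rw [hstar lam hlam, hinf]
    exact ⟨rfl, hfin⟩

/-- Lemma 5.5(b,c): minimizers of `φ_τ` yield optimal solutions of (P), and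
`(x*, y*, 0, 0, λ)` minimizes `φ_τ` for every `λ ≥ λ*`. -/
theorem phiTau_minimizers
    [NormedSpace ℝ Q] [FiniteDimensional ℝ Q]
    (X : Set (Rn n)) (Y : Set (Rn m)) (D : Set Q)
    (f : Rn n × Rn m → EReal) (g : Rn n × Rn m → ℝ) (H : Rn n × Rn m → Q)
    (τ : ℝ) (hτ : 0 ≤ τ)
    (hXne : X.Nonempty) (hYne : Y.Nonempty) (hDne : D.Nonempty)
    (hf_bot : ∀ p, f p ≠ ⊥)
    (xstar : Rn n) (ystar : Rn m) (lamstar : ℝ)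
    (hopt : POpt X Y D f g H τ xstar ystar)
    (hcalm : CalmAtWith Y D g H xstar lamstar) :
    (∀ (xb : Rn n) (yb : Rn m) (ub : Q) (αb lamb : ℝ),
      phiBeta X Y D f g H τ xb yb ub αb lamb = phiBetaInf X Y D f g H τ →
      phiBeta X Y D f g H τ xb yb ub αb lamb ≠ ⊤ →
      POpt X Y D f g H τ xb yb) ∧
    (∀ lam : ℝ, lamstar ≤ lam →
      phiBeta X Y D f g H τ xstar ystar 0 0 lam = phiBetaInf X Y D f g H τ ∧
      phiBeta X Y D f g H τ xstar ystar 0 0 lam ≠ ⊤) :=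
  phiTau_minimizers_general X Y D f g H τ hDne xstar ystar lamstar hopt hcalm
end
end
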